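/- arXiv:math/0606188 — 5 statements merged into one kernel-verified Lean document; each statement's English description precedes it below -/
import Mathlib

section
/- The Continuum Hypothesis holds if and only if the set of all nonzero real numbers can be written as the union of countably many Hamel bases of ℝ. -/
/-!
Under CH, well-order `ℝ` in type `ω₁`; the `ℚ`-spans `V α` of the initial segments form an
increasing chain of countable subspaces. Indexing each nonzero `z` by the first `α`
with `z ∈ V α`, every fibre is countable, so the nonzero reals split into countably many sets on
which this index is injective, and such a set is linearly independent (its element of largest
index lies outside the span of the others). Extending each set to a Hamel basis gives the cover.

Conversely, if `𝔠 > ℵ₁`, pick inside a Hamel basis disjoint sets `A`, `C` with `|C| = ℵ₁ < |A|`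
and colour `a + c` by a basis of the cover containing it. Each row `c ↦ colour (a + c)` repeats a
colour, and there are only `ℵ₁` possible repetitions, so two rows repeat the same one: this
yields `a₁ + c₁, a₁ + c₂, a₂ + c₁, a₂ + c₂` in one basis, although
`(a₁ + c₁) + (a₂ + c₂) = (a₁ + c₂) + (a₂ + c₁)`.
-/

open Cardinal Set Submodule

universe u

theorem exists_monochromatic_rectangle {A C : Type u} (hC : ℵ₀ < #C) (hCA : #C < #A)
    (f : A → C → ℕ) : ∃ a₁ a₂ c₁ c₂ n, a₁ ≠ a₂ ∧ c₁ ≠ c₂ ∧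
      f a₁ c₁ = n ∧ f a₁ c₂ = n ∧ f a₂ c₁ = n ∧ f a₂ c₂ = n := by
  have hrow a : ∃ c₁ c₂, f a c₁ = f a c₂ ∧ c₁ ≠ c₂ :=
    Function.not_injective_iff.1 fun hinj => hC.not_ge (mk_le_aleph0_iff.2 hinj.countable)
  choose c₁ c₂ hc hne using hrow
  have hcard : #(ℕ × C × C) < #A := by
    simpa [mul_eq_self hC.le, aleph0_mul_eq hC.le] using hCA
  obtain ⟨a₁, a₂, heq, ha⟩ := Function.not_injective_iff.1
    fun hinj : Function.Injective (fun a => (f a (c₁ a), c₁ a, c₂ a)) =>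
      (mk_le_of_injective hinj).not_gt hcard
  simp only [Prod.mk.injEq] at heq
  obtain ⟨hf, h1, h2⟩ := heq
  exact ⟨a₁, a₂, c₁ a₁, c₂ a₁, _, ha, hne a₁, rfl, (hc a₁).symm, by rw [hf, h1],
    by rw [hf, h2, ← hc a₂]⟩

section Semiring

variable {K M : Type*} [Semiring K] [AddCommMonoid M] [Module K M]

theorem Set.Countable.span [Countable K] {s : Set M} (hs : s.Countable) :
    (Submodule.span K s : Set M).Countable := by
  have := hs.to_subtype
  exact countable_coe_iff.1 (by simpa using
    (inferInstance : Countable (Submodule.span K (range ((↑) : s → M)))))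

theorem notMem_span_of_forall_lt_notMem {ι : Type*} [LinearOrder ι] {V : ι → Submodule K M}
    (hV : Monotone V) {t : M → ι} (hmem : ∀ z, z ∈ V (t z)) {z : M} (hz : z ≠ 0)
    (hmin : ∀ α < t z, z ∉ V α) : z ∉ span K {y | t y < t z} := by
  intro h
  obtain ⟨T, hT, hzT⟩ := mem_span_finite_of_mem_span h
  obtain rfl | hne := T.eq_empty_or_nonempty
  · exact hz (by simpa using hzT)
  · exact hmin (T.sup' hne t) ((Finset.sup'_lt_iff hne).2 fun y hy => hT hy)
      (span_le.2 (fun y hy => hV (T.le_sup' t hy) (hmem y)) hzT)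

end Semiring

section DivisionRing

variable {K M : Type*} [DivisionRing K] [AddCommGroup M] [Module K M]

theorem linearIndepOn_of_injOn_of_notMem_span {ι : Type*} [LinearOrder ι] {t : M → ι}
    (ht : ∀ z ≠ 0, z ∉ span K {y | t y < t z}) {S : Set M} (hS0 : 0 ∉ S) (hinj : InjOn t S) :
    LinearIndepOn K id S := by
  classical
  refine linearIndepOn_of_finite S fun T hTS hT => ?_
  lift T to Finset M using hT
  induction T using Finset.induction_on_max_value t with
  | empty => simp
  | insert a T haT hmax ih =>
    rw [Finset.coe_insert] at hTS ⊢
    have haS : a ∈ S := hTS (mem_insert a _)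
    have hlt : (T : Set M) ⊆ {y | t y < t a} := fun y hy =>
      (hmax y hy).lt_of_ne fun h => haT (hinj (hTS (mem_insert_of_mem _ hy)) haS h ▸ hy)
    exact (ih ((subset_insert _ _).trans hTS)).id_insert
      fun h => ht a (ne_of_mem_of_not_mem haS hS0) (span_mono hlt h)

theorem exists_linearIndepOn_cover_of_countable_chain {ι : Type*} [LinearOrder ι]
    [WellFoundedLT ι] {V : ι → Submodule K M} (hV : Monotone V) (hcov : ∀ z, ∃ α, z ∈ V α)
    (hcount : ∀ α, (V α : Set M).Countable) :
    ∃ X : ℕ → Set M, (∀ n, LinearIndepOn K id (X n)) ∧ {x | x ≠ 0} ⊆ ⋃ n, X n := by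
  let t z := wellFounded_lt.min {α | z ∈ V α} (hcov z)
  have hmem z : z ∈ V (t z) := wellFounded_lt.min_mem {α | z ∈ V α} (hcov z)
  have hmin z : ∀ α < t z, z ∉ V α := fun α hα hz =>
    wellFounded_lt.not_lt_min {α | z ∈ V α} hz hα
  have hfib α : (t ⁻¹' {α}).Countable := (hcount α).mono fun z hz => hz ▸ hmem z
  choose φ hφ using fun α => countable_iff_exists_injOn.1 (hfib α)
  refine ⟨fun n => {z | z ≠ 0 ∧ φ (t z) z = n}, fun n => ?_, ?_⟩
  · refine linearIndepOn_of_injOn_of_notMem_span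
      (fun z hz => notMem_span_of_forall_lt_notMem hV hmem hz (hmin z)) (fun h => h.1 rfl)
      fun z hz z' hz' h => hφ (t z) rfl h.symm (hz.2.trans (h ▸ hz'.2).symm)
  · exact fun z hz => mem_iUnion.2 ⟨_, hz, rfl⟩

theorem exists_linearIndepOn_cover_of_mk_le_aleph_one [Countable K] (hM : #M ≤ ℵ₁) :
    ∃ X : ℕ → Set M, (∀ n, LinearIndepOn K id (X n)) ∧ {x | x ≠ 0} ⊆ ⋃ n, X n := by
  obtain ⟨e⟩ : Nonempty (M ↪ (ℵ₁ : Cardinal).ord.ToType) := by rwa [← le_def, mk_ord_toType]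
  refine exists_linearIndepOn_cover_of_countable_chain (V := fun α => span K (e ⁻¹' Iic α))
    (fun α β h => span_mono fun z hz => le_trans hz h)
    (fun z => ⟨e z, subset_span (show e z ≤ e z from le_rfl)⟩)
    fun α => Set.Countable.span ?_
  refine Countable.preimage ?_ e.injective
  rw [← Iio_insert, countable_insert, ← le_aleph0_iff_set_countable, ← lt_aleph_one_iff]
  simpa using mk_Iio_lt α

theorem exists_basis_cover_of_linearIndepOn_cover {X : ℕ → Set M}
    (hX : ∀ n, LinearIndepOn K id (X n)) (hcov : {x | x ≠ 0} ⊆ ⋃ n, X n) :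
    ∃ B : ℕ → Set M, (∀ n, LinearIndepOn K id (B n) ∧ span K (B n) = ⊤) ∧
      {x | x ≠ 0} = ⋃ n, B n := by
  refine ⟨fun n => (hX n).extend (subset_univ _), fun n => ⟨(hX n).linearIndepOn_extend _,
    eq_top_iff.2 fun x _ => (hX n).subset_span_extend _ (mem_univ x)⟩,
    (hcov.trans (iUnion_mono fun n => (hX n).subset_extend _)).antisymm ?_⟩
  exact iUnion_subset fun n x hx => ((hX n).linearIndepOn_extend _).ne_zero hx

theorem LinearIndepOn.notMem_span_diff_singleton {S : Set M} (hS : LinearIndepOn K id S)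
    {u : M} (hu : u ∈ S) : u ∉ span K (S \ {u}) :=
  (hS.mono sdiff_subset).notMem_span_iff_id.2
    ⟨by rwa [insert_sdiff_singleton, insert_eq_of_mem hu], fun h => h.2 rfl⟩

theorem LinearIndepOn.add_ne_zero_of_ne {S : Set M} (hS : LinearIndepOn K id S) {x y : M}
    (hx : x ∈ S) (hy : y ∈ S) (hxy : x ≠ y) : x + y ≠ 0 := fun h => by
  have hy' : y ∈ span K (S \ {x}) := subset_span ⟨hy, hxy.symm⟩
  have := neg_mem hy'
  rw [neg_eq_of_add_eq_zero_left h] at this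
  exact hS.notMem_span_diff_singleton hx this

theorem LinearIndepOn.add_ne_add {S : Set M} (hS : LinearIndepOn K id S) {u v w z : M}
    (hu : u ∈ S) (hv : v ∈ S) (hw : w ∈ S) (hz : z ∈ S) (huv : u ≠ v) (huw : u ≠ w)
    (huz : u ≠ z) : u + z ≠ v + w := fun h => by
  have mem {a} (ha : a ∈ S) (hua : u ≠ a) : a ∈ span K (S \ {u}) :=
    subset_span ⟨ha, hua.symm⟩
  have := sub_mem (add_mem (mem hv huv) (mem hw huw)) (mem hz huz)
  rw [← eq_sub_of_add_eq h] at this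
  exact hS.notMem_span_diff_singleton hu this

theorem LinearIndepOn.mk_le_aleph_one_of_linearIndepOn_cover {B : ℕ → Set M}
    (hB : ∀ n, LinearIndepOn K id (B n)) (hcov : {x | x ≠ 0} ⊆ ⋃ n, B n) {S : Set M}
    (hS : LinearIndepOn K id S) : #S ≤ ℵ₁ := by
  by_contra! hS₁
  obtain ⟨C, hCS, hC⟩ := le_mk_iff_exists_subset.1 hS₁.le
  have hCA : #C < #↥(S \ C) := by
    by_contra! h
    exact hS₁.not_ge ((le_mk_sdiff_add_mk S C).trans
      ((add_le_add (h.trans hC.le) hC.le).trans (add_eq_self (aleph0_le_aleph 1)).le))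
  have hac (a : ↥(S \ C)) (c : C) : (a : M) ≠ c := fun h => a.2.2 (h ▸ c.2)
  have hcolor (a : ↥(S \ C)) (c : C) : ∃ n, (a + c : M) ∈ B n :=
    mem_iUnion.1 (hcov (hS.add_ne_zero_of_ne a.2.1 (hCS c.2) (hac a c)))
  choose f hf using hcolor
  obtain ⟨a₁, a₂, c₁, c₂, n, ha, hc, h11, h12, h21, h22⟩ :=
    exists_monochromatic_rectangle (hC ▸ aleph0_lt_aleph_one) hCA f
  refine (hB n).add_ne_add (h11 ▸ hf a₁ c₁) (h12 ▸ hf a₁ c₂) (h21 ▸ hf a₂ c₁) (h22 ▸ hf a₂ c₂)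
    (fun h => hc (Subtype.ext (add_left_cancel h)))
    (fun h => ha (Subtype.ext (add_right_cancel h))) ?_ (by abel)
  exact hS.add_ne_add a₁.2.1 a₂.2.1 (hCS c₂.2) (hCS c₁.2) (Subtype.coe_injective.ne ha)
    (hac a₁ c₂) (hac a₁ c₁)

theorem rank_le_aleph_one_of_linearIndepOn_cover {B : ℕ → Set M}
    (hB : ∀ n, LinearIndepOn K id (B n)) (hcov : {x | x ≠ 0} ⊆ ⋃ n, B n) :
    Module.rank K M ≤ ℵ₁ := by
  rw [← (Module.Basis.ofVectorSpace K M).mk_eq_rank'']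
  exact LinearIndepOn.mk_le_aleph_one_of_linearIndepOn_cover hB hcov
    (Module.Basis.ofVectorSpaceIndex.linearIndependent K M)

end DivisionRing

/-- The Continuum Hypothesis holds if and only if the set of all nonzero real numbers can be
written as the union of countably many Hamel bases of `ℝ` (i.e. bases of `ℝ` as a vector
space over `ℚ`). -/
theorem ch_iff_nonzero_reals_union_of_hamel_bases :
    Cardinal.continuum = Cardinal.aleph 1 ↔
      ∃ B : ℕ → Set ℝ,
        (∀ n, LinearIndependent ℚ (fun x : B n => (x : ℝ)) ∧
          Submodule.span ℚ (B n) = ⊤) ∧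
        {x : ℝ | x ≠ 0} = ⋃ n, B n := by
  rw [← lift_continuum.{_, 0}, lift_eq_aleph_one]
  constructor
  · intro hch
    obtain ⟨X, hX, hcov⟩ :=
      exists_linearIndepOn_cover_of_mk_le_aleph_one (K := ℚ) (mk_real.trans hch).le
    exact exists_basis_cover_of_linearIndepOn_cover hX hcov
  · rintro ⟨B, hB, hcov⟩
    refine le_antisymm ?_ aleph_one_le_continuum
    rw [← Real.rank_rat_real]
    exact rank_le_aleph_one_of_linearIndepOn_cover (fun n => (hB n).1) hcov.subset
end

section
/- Let X be a metric space, d a natural number, F an usco map from X to ℝ^d, and f : X → ℝ^d a function of the first Baire class such that f(x) ∈ F(x) for every x ∈ X. Then there exist an usco map G from X to ℝ^d and a sequence of continuous functions f_n : X → ℝ^d converging pointwise to f such that f_n(x) ∈ G(x) for every n ∈ ℕ and every x ∈ X. -/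
open Filter Topology

/-- `F` is an usco map: a set-valued map with nonempty compact values which is upper
semicontinuous (for every open `U ⊇ F x` there is a neighborhood of `x` on which all values
are contained in `U`). -/
def IsUsco {X Y : Type*} [TopologicalSpace X] [TopologicalSpace Y] (F : X → Set Y) : Prop :=
  (∀ x, (F x).Nonempty) ∧ (∀ x, IsCompact (F x)) ∧
    ∀ x, ∀ U : Set Y, IsOpen U → F x ⊆ U → ∀ᶠ y in 𝓝 x, F y ⊆ U

/-- If `f : X → ℝ^d` is of the first Baire class on a metric space `X` and its graph is
contained in the graph of an usco map `F`, then there is an usco map `G` and a sequence of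
continuous functions converging pointwise to `f`, all of whose graphs are contained in the
graph of `G`. -/
theorem baire_one_selection_in_usco {X : Type*} [MetricSpace X] (d : ℕ)
    (F : X → Set (Fin d → ℝ)) (hF : IsUsco F)
    (f : X → (Fin d → ℝ))
    (hf : ∃ g : ℕ → X → (Fin d → ℝ), (∀ n, Continuous (g n)) ∧
      ∀ x, Tendsto (fun n => g n x) atTop (𝓝 (f x)))
    (hfF : ∀ x, f x ∈ F x) :
    ∃ (G : X → Set (Fin d → ℝ)) (fn : ℕ → X → (Fin d → ℝ)),
      IsUsco G ∧
      (∀ n, Continuous (fn n)) ∧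
      (∀ x, Tendsto (fun n => fn n x) atTop (𝓝 (f x))) ∧
      ∀ n x, fn n x ∈ G x := by
  obtain ⟨g, hgc, hgt⟩ := hf
  obtain ⟨_, hFc, hFu⟩ := hF
  -- `‖f‖` is locally bounded
  have hloc : ∀ x : X, ∃ c : ℝ, ∀ᶠ y in 𝓝 x, c ∈ Set.Ioi ‖f y‖ := by
    intro x
    obtain ⟨R, hR⟩ := (hFc x).isBounded.subset_ball 0
    refine ⟨R, ?_⟩
    filter_upwards [hFu x (Metric.ball 0 R) Metric.isOpen_ball hR] with y hy
    simpa using hy (hfF y)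
  -- a continuous function dominating `‖f‖`
  obtain ⟨φ, hφ⟩ : ∃ φ : C(X, ℝ), ∀ x, φ x ∈ Set.Ioi ‖f x‖ :=
    exists_continuous_forall_mem_convex_of_local_const (fun x => convex_Ioi _) hloc
  have hφpos : ∀ x, 0 < φ x := fun x => (norm_nonneg (f x)).trans_lt (hφ x)
  have hmaxpos : ∀ n x, 0 < max (φ x) ‖g n x‖ := fun n x => lt_max_of_lt_left (hφpos x)
  set fn : ℕ → X → (Fin d → ℝ) :=
    fun n x => (φ x / max (φ x) ‖g n x‖) • g n x with hfn
  have hfn_norm : ∀ n x, ‖fn n x‖ ≤ φ x := by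
    intro n x
    rw [hfn, norm_smul, Real.norm_eq_abs,
      abs_of_pos (div_pos (hφpos x) (hmaxpos n x)), div_mul_eq_mul_div,
      div_le_iff₀ (hmaxpos n x)]
    exact mul_le_mul_of_nonneg_left (le_max_right _ _) (hφpos x).le
  refine ⟨fun x => Metric.closedBall 0 (φ x), fn, ⟨?_, ?_, ?_⟩, ?_, ?_, ?_⟩
  · exact fun x => ⟨0, Metric.mem_closedBall_self (hφpos x).le⟩
  · exact fun x => isCompact_closedBall 0 (φ x)
  · -- upper semicontinuity of the closed ball map
    intro x U hU hsub
    obtain ⟨δ, hδ, hth⟩ :=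
      (isCompact_closedBall (0 : Fin d → ℝ) (φ x)).exists_thickening_subset_open hU hsub
    have : ∀ᶠ y in 𝓝 x, φ y < φ x + δ / 2 :=
      (φ.continuous.tendsto x).eventually_lt tendsto_const_nhds (by linarith)
    filter_upwards [this] with y hy z hz
    apply hth
    simp only [Metric.mem_closedBall, dist_zero_right] at hz
    rcases le_or_gt ‖z‖ (φ x) with h | h
    · exact Metric.self_subset_thickening hδ _ (by simpa using h)
    · refine Metric.mem_thickening_iff.2 ⟨(φ x / ‖z‖) • z, ?_, ?_⟩
      · simp only [Metric.mem_closedBall, dist_zero_right, norm_smul, Real.norm_eq_abs]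
        rw [abs_of_pos (div_pos (hφpos x) ((hφpos x).trans h)),
          div_mul_cancel₀ _ (((hφpos x).trans h).ne')]
      · have hz0 : (0:ℝ) < ‖z‖ := (hφpos x).trans h
        have : dist z ((φ x / ‖z‖) • z) = ‖z‖ - φ x := by
          rw [dist_eq_norm]
          nth_rewrite 1 [← one_smul ℝ z]
          rw [← sub_smul, norm_smul, Real.norm_eq_abs,
            abs_of_nonneg (by rw [sub_nonneg]; exact (div_le_one hz0).2 (le_of_lt h))]
          field_simp
        rw [this]
        linarith
  · -- continuity of `fn n`
    intro n
    exact ((φ.continuous.div (φ.continuous.max (hgc n).norm)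
      (fun x => (hmaxpos n x).ne')).smul (hgc n))
  · -- pointwise convergence
    intro x
    have hev : ∀ᶠ n in atTop, fn n x = g n x := by
      have : ∀ᶠ n in atTop, ‖g n x‖ < φ x :=
        ((hgt x).norm.eventually_lt tendsto_const_nhds (hφ x))
      filter_upwards [this] with n hn
      rw [hfn]
      simp [max_eq_left hn.le, div_self (hφpos x).ne']
    exact Tendsto.congr' (by filter_upwards [hev] with n hn; exact hn.symm) (hgt x)
  · intro n x
    simpa using hfn_norm n x
end

section
/- (Erdős–Rado theorem) Let κ be an infinite cardinal and let A be a set of cardinality (2^κ)⁺. Then for every function c assigning to each two-element subset of A one of at most κ colors, there exists a subset H ⊆ A of cardinality κ⁺ that is homogeneous for c, i.e., c is constant on the two-element subsets of H. -/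
/-!
Put `μ = 2 ^ κ`, so that `μ ^ κ = μ`, and call `x ↦ c {x, a}` on `X` the type of `a` over `X`.
Closing up along a chain of length `κ⁺`, which is regular, gives `B ⊆ A` with `#B ≤ μ` such that
every type over a subset `X ⊆ B` of size at most `κ` that is realized outside `X` is realized
in `B \ X`: there are at most `μ ^ κ` such pairs of a set and a type. Fix `a ∉ B` and choose
`x_γ ∈ B` for `γ < κ⁺` realizing the type of `a` over `{x_β | β < γ}`. For `β < γ` the colour of
`{x_β, x_γ}` is then `c {x_β, a}`, which depends only on `β`; as there are at most `κ` colours,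
`κ⁺` of the `x_β` share it.
-/

open Cardinal Set Function Order

universe u

noncomputable def transfiniteRec {I β : Type*} [LinearOrder I] [WellFoundedLT I]
    (F : Set β → β) : I → β :=
  WellFoundedLT.fix fun γ ih => F (range fun β : Iio γ => ih β β.2)

theorem transfiniteRec_eq {I β : Type*} [LinearOrder I] [WellFoundedLT I] (F : Set β → β)
    (γ : I) : transfiniteRec F γ = F (transfiniteRec F '' Iio γ) := by
  rw [image_eq_range]
  exact WellFoundedLT.fix_eq _ γ

theorem mk_Iio_toType_ord_succ_le (κ : Cardinal.{u}) (γ : (succ κ).ord.ToType) :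
    #(Iio γ) ≤ κ :=
  lt_succ_iff.mp (by simpa using mk_Iio_lt γ)

theorem exists_card_le_closed_under_small {α : Type u} {κ μ : Cardinal.{u}} (hκ : ℵ₀ ≤ κ)
    (hκμ : κ < μ) (g : Set α → Set α) (hg : ∀ S : Set α, #S ≤ μ → #(g S) ≤ μ) :
    ∃ B : Set α, #B ≤ μ ∧ ∀ X ⊆ B, #X ≤ κ → ∃ S ⊆ B, X ⊆ S ∧ g S ⊆ B := by
  have hμ₀ : ℵ₀ ≤ μ := hκ.trans hκμ.le
  let stage : (succ κ).ord.ToType → Set α := transfiniteRec fun 𝒮 => g (⋃₀ 𝒮)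
  have stage_eq : ∀ γ, stage γ = g (⋃ β ∈ Iio γ, stage β) := fun γ => by
    rw [← sUnion_image]; exact transfiniteRec_eq _ γ
  have mk_stage : ∀ γ, #(stage γ) ≤ μ := fun γ => by
    induction γ using WellFoundedLT.induction with
    | ind γ ih =>
      rw [stage_eq]
      refine hg _ ((mk_biUnion_le _ _).trans (mul_le_of_le hμ₀ ?_ (ciSup_le' fun β => ih β β.2)))
      exact (mk_Iio_toType_ord_succ_le κ γ).trans hκμ.le
  refine ⟨⋃ γ, stage γ, ?_, fun X hXB hX => ?_⟩
  · refine (mk_iUnion_le _).trans (mul_le_of_le hμ₀ ?_ (ciSup_le' mk_stage))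
    simpa using succ_le_of_lt hκμ
  · choose b hb using fun x : X => mem_iUnion.mp (hXB x.2)
    -- `succ κ` is regular, so the `κ` stages `b x` are bounded by some `γ`.
    obtain ⟨γ, hγ⟩ := not_isCofinal_iff.mp fun h : IsCofinal (range b) => (cof_le h).not_gt <| by
      rw [Ordinal.cof_toType, (isRegular_succ hκ).cof_ord]
      exact mk_range_le.trans_lt (hX.trans_lt (lt_succ κ))
    refine ⟨⋃ β ∈ Iio γ, stage β, iUnion₂_subset fun β _ => subset_iUnion stage β,
      fun x hx => mem_biUnion (hγ _ (mem_range_self ⟨x, hx⟩)) (hb ⟨x, hx⟩), ?_⟩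
    rw [← stage_eq]
    exact subset_iUnion stage γ

section PairColoring

variable {A C : Type u} (col : Sym2 A → C)

def pairType (X : Set A) (a : A) : X → C := fun x => col s(x, a)

theorem exists_small_realizing_subset (X : Set A) :
    ∃ R ⊆ Xᶜ, #R ≤ #C ^ #X ∧ ∀ a ∉ X, ∃ u ∈ R, pairType col X u = pairType col X a := by
  obtain ⟨R, hRX, hR⟩ := exists_subset_bijOn Xᶜ (pairType col X)
  refine ⟨R, hRX, ?_, fun a ha => hR.surjOn ⟨a, ha, rfl⟩⟩
  rw [power_def]
  exact mk_le_of_injective hR.injOn.injective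

def RealizesSmallTypes (κ : Cardinal.{u}) (B : Set A) : Prop :=
  ∀ X ⊆ B, #X ≤ κ → ∀ a ∉ X, ∃ u ∈ B, u ∉ X ∧ pairType col X u = pairType col X a

theorem exists_realizesSmallTypes {κ μ : Cardinal.{u}} (hκ : ℵ₀ ≤ κ) (hκμ : κ < μ)
    (hμ : μ ^ κ ≤ μ) (hC : #C ≤ μ) : ∃ B : Set A, #B ≤ μ ∧ RealizesSmallTypes col κ B := by
  choose R hRX hRcard hR using exists_small_realizing_subset col
  have hμ₀ : ℵ₀ ≤ μ := hκ.trans hκμ.le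
  obtain ⟨B, hBcard, hB⟩ := exists_card_le_closed_under_small hκ hκμ
    (fun S => ⋃ X : {X // X ⊆ S ∧ #X ≤ κ}, R X) fun S hS => by
      refine (mk_iUnion_le _).trans (mul_le_of_le hμ₀ ?_ (ciSup_le' fun X => ?_))
      · calc _ ≤ max #S ℵ₀ ^ κ := mk_bounded_subset_le S κ
          _ ≤ μ ^ κ := power_le_power_right (max_le hS hμ₀)
          _ ≤ μ := hμ
      · calc #(R X) ≤ #C ^ #X.1 := hRcard X
          _ ≤ μ ^ κ := (power_le_power_right hC).trans
              (power_le_power_left (aleph0_pos.trans_le hμ₀).ne' X.2.2)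
          _ ≤ μ := hμ
  refine ⟨B, hBcard, fun X hXB hX a ha => ?_⟩
  obtain ⟨S, -, hXS, hSB⟩ := hB X hXB hX
  obtain ⟨u, hu, hua⟩ := hR X a ha
  exact ⟨u, hSB (mem_iUnion_of_mem ⟨X, hXS, hX⟩ hu), hRX X hu, hua⟩

theorem exists_endHomogeneous {κ : Cardinal.{u}} {I : Type u} [LinearOrder I] [WellFoundedLT I]
    (hI : ∀ γ : I, #(Iio γ) ≤ κ) {B : Set A} (hB : RealizesSmallTypes col κ B) {a : A}
    (ha : a ∉ B) :
    ∃ f : I → A, Injective f ∧ ∀ ⦃β γ⦄, β < γ → col s(f β, f γ) = col s(f β, a) := by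
  have : Nonempty A := ⟨a⟩
  let f : I → A := transfiniteRec fun X =>
    Classical.epsilon fun u => u ∈ B ∧ u ∉ X ∧ pairType col X u = pairType col X a
  have hf : ∀ γ, f γ ∈ B ∧ f γ ∉ f '' Iio γ ∧
      pairType col (f '' Iio γ) (f γ) = pairType col (f '' Iio γ) a := fun γ => by
    induction γ using WellFoundedLT.induction with
    | ind γ ih =>
      have hsub : f '' Iio γ ⊆ B := image_subset_iff.mpr fun β hβ => (ih β hβ).1
      rw [show f γ = _ from transfiniteRec_eq _ γ]
      exact Classical.epsilon_spec (hB _ hsub (mk_image_le.trans (hI γ)) a fun h => ha (hsub h))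
  have hne : ∀ ⦃β γ⦄, β < γ → f β ≠ f γ := fun β γ h e => (hf γ).2.1 ⟨β, h, e⟩
  refine ⟨f, fun β γ e => ?_, fun β γ h => congrFun (hf γ).2.2 ⟨f β, β, h, rfl⟩⟩
  by_contra hβγ
  rcases lt_or_gt_of_ne hβγ with h | h
  exacts [hne h e, hne h e.symm]

theorem exists_homogeneous_of_pow_le {κ μ : Cardinal.{u}} (hκ : ℵ₀ ≤ κ) (hκμ : κ < μ)
    (hμ : μ ^ κ ≤ μ) (hA : μ < #A) (hC : #C ≤ κ) :
    ∃ H : Set A, #H = succ κ ∧ ∃ c₀, H.Pairwise fun x y => col s(x, y) = c₀ := by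
  obtain ⟨B, hBcard, hB⟩ := exists_realizesSmallTypes col hκ hκμ hμ (hC.trans hκμ.le)
  obtain ⟨a, ha⟩ : ∃ a, a ∉ B := by
    by_contra! h
    exact (hBcard.trans_lt hA).not_ge (by rw [eq_univ_of_forall h, mk_univ])
  obtain ⟨f, hf, hcol⟩ := exists_endHomogeneous col (mk_Iio_toType_ord_succ_le κ) hB ha
  obtain ⟨c₀, hc₀⟩ := infinite_pigeonhole_card (fun β => col s(f β, a)) (succ κ)
    (by simp) (hκ.trans (le_succ κ)) (by
      rw [(isRegular_succ hκ).cof_ord]; exact hC.trans_lt (lt_succ κ))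
  refine ⟨f '' ((fun β => col s(f β, a)) ⁻¹' {c₀}), ?_, c₀, ?_⟩
  · rw [mk_image_eq hf]
    exact le_antisymm ((mk_set_le _).trans (by simp)) hc₀
  · refine Pairwise.image fun β hβ γ hγ hβγ => ?_
    rcases lt_or_gt_of_ne hβγ with h | h
    · exact (hcol h).trans hβ
    · exact (Sym2.eq_swap ▸ hcol h).trans hγ

end PairColoring

theorem exists_sym2_extension {A C : Type u} [DecidableEq A] [Nonempty C]
    (c : {s : Finset A // s.card = 2} → C) :
    ∃ col : Sym2 A → C, ∀ x y (h : x ≠ y), col s(x, y) = c ⟨{x, y}, Finset.card_pair h⟩ := by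
  refine ⟨fun z => if h : z.IsDiag then Classical.arbitrary C
    else c ⟨z.toFinset, z.card_toFinset_of_not_isDiag h⟩, fun x y hxy => ?_⟩
  simp only [Sym2.mk_isDiag_iff, hxy, dite_false, Sym2.toFinset_mk_eq]

/-- Erdős–Rado theorem: if `κ` is an infinite cardinal and `A` has cardinality `(2^κ)⁺`,
then every coloring of the two-element subsets of `A` with at most `κ` colors has a
homogeneous set of cardinality `κ⁺`. -/
theorem erdos_rado {κ : Cardinal.{u}} (hκ : ℵ₀ ≤ κ)
    {A : Type u} (hA : #A = Order.succ (2 ^ κ))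
    {C : Type u} (hC : #C ≤ κ)
    (c : {s : Finset A // s.card = 2} → C) :
    ∃ H : Set A, #H = Order.succ κ ∧
      ∀ s t : {s : Finset A // s.card = 2},
        ↑s.1 ⊆ H → ↑t.1 ⊆ H → c s = c t := by
  classical
  obtain ⟨x₀, y₀, hxy₀⟩ : ∃ x y : A, x ≠ y := two_le_iff.mp <| by
    rw [hA]
    exact (natCast_lt_aleph0 (n := 2)).le.trans (hκ.trans ((cantor κ).trans (lt_succ _)).le)
  have : Nonempty C := ⟨c ⟨{x₀, y₀}, Finset.card_pair hxy₀⟩⟩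
  obtain ⟨col, hcol⟩ := exists_sym2_extension c
  obtain ⟨H, hH, c₀, hhom⟩ := exists_homogeneous_of_pow_le col hκ (cantor κ)
    (by rw [← power_mul, mul_eq_self hκ]) (hA ▸ lt_succ _) hC
  have hc₀ : ∀ s : {s : Finset A // s.card = 2}, ↑s.1 ⊆ H → c s = c₀ := by
    rintro ⟨s, hs⟩ hsH
    obtain ⟨x, y, hxy, rfl⟩ := Finset.card_eq_two.mp hs
    rw [← hcol x y hxy]
    exact hhom (hsH (by simp)) (hsH (by simp)) hxy
  exact ⟨H, hH, fun s t hs ht => (hc₀ s hs).trans (hc₀ t ht).symm⟩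
end

section
/- The equivalence relation E_{𝒵₀} on the power set of ℕ, defined by A E_{𝒵₀} B if and only if the symmetric difference A △ B has asymptotic density zero, is Borel bireducible with the equivalence relation E_{c₀} on ℝ^ℕ, defined by x E_{c₀} y if and only if the sequence (x_n − y_n) converges to 0; that is, each of these two equivalence relations is Borel reducible to the other. -/
open Filter Topology

/-- The equivalence relation `E_{𝒵₀}` on the Cantor space `2^ℕ` (identified with the power
set of `ℕ`): two sets are equivalent iff their symmetric difference has asymptotic density
zero. -/
def densityZeroEquiv (x y : ℕ → Bool) : Prop :=
  Tendsto (fun n => (((Finset.range n).filter fun k => x k ≠ y k).card : ℝ) / n)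
    atTop (𝓝 0)

/-- The equivalence relation `E_{c₀}` on `ℝ^ℕ`: two sequences are equivalent iff their
difference converges to `0`. -/
def c0Equiv (x y : ℕ → ℝ) : Prop :=
  Tendsto (fun n => x n - y n) atTop (𝓝 0)

/-- `E` (on a space `X`) is Borel reducible to `F` (on a space `Y`): there is a Borel
measurable `f : X → Y` with `x₁ E x₂ ↔ f x₁ F f x₂`. -/
def BorelReducible {X Y : Type*} [MeasurableSpace X] [MeasurableSpace Y]
    (E : X → X → Prop) (F : Y → Y → Prop) : Prop :=
  ∃ f : X → Y, Measurable f ∧ ∀ x₁ x₂ : X, E x₁ x₂ ↔ F (f x₁) (f x₂)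

/-!
Both reductions go through the dyadic blocks `[2 ^ i, 2 ^ (i + 1))`. A set has density zero
iff its relative size on the `i`-th block tends to zero: the relative count below
`2 ^ (m + 1)` is the mean of the relative count below `2 ^ m` and the relative size on
block `m`.

For `E_{𝒵₀} ≤ E_{c₀}`, index coordinates by pairs `(i, s)` with `s` a subset of block `i` and
record the normalized Hamming distance from `A` to `s` on that block. By the triangle inequality
these coordinates of `A` and `B` differ by at most the block density of `A △ B`, and the
coordinate `s = B ∩ block i` recovers that density exactly.

For `E_{c₀} ≤ E_{𝒵₀}`, first pass to the `[0, 1]`-valued coordinates `ramp k (x n)`,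
`(n, k) ∈ ℕ × ℤ`, which reduce `E_{c₀}` to itself; then code a `[0, 1]`-valued sequence `u`
by the initial segment of length `⌊u i * 2 ^ i⌋` of block `i`, whose symmetric difference
with the segment for `v` has block density `|u i - v i|` up to `2⁻ⁱ`.
-/

open Finset

def dyadicBlock (i : ℕ) : Finset ℕ := Ico (2 ^ i) (2 ^ (i + 1))

lemma tendsto_zero_of_le_half_add {c b : ℕ → ℝ} (hc : ∀ m, 0 ≤ c m)
    (hrec : ∀ m, c (m + 1) ≤ (c m + b m) / 2) (hb : Tendsto b atTop (𝓝 0)) :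
    Tendsto c atTop (𝓝 0) := by
  refine Metric.tendsto_atTop.2 fun ε hε => ?_
  obtain ⟨J, hJ⟩ := Metric.tendsto_atTop.1 hb (ε / 2) (half_pos hε)
  -- Past `J` the excess of `c` over `ε / 2` is at least halved at every step.
  have hdecay : ∀ m ≥ J, c m ≤ ε / 2 + c J / 2 ^ (m - J) := by
    intro m hm
    induction m, hm using Nat.le_induction with
    | base => simp only [Nat.sub_self, pow_zero, div_one]; linarith
    | succ m hm ih =>
      have hbm : b m < ε / 2 := (abs_lt.1 (by simpa using hJ m hm)).2
      rw [Nat.sub_add_comm hm, pow_succ, ← div_div]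
      linarith [hrec m]
  have hgeom : Tendsto (fun m => c J / 2 ^ (m - J)) atTop (𝓝 0) :=
    tendsto_const_nhds.div_atTop <|
      (tendsto_pow_atTop_atTop_of_one_lt one_lt_two).comp (tendsto_sub_atTop_nat J)
  obtain ⟨M, hM⟩ := Metric.tendsto_atTop.1 hgeom (ε / 2) (half_pos hε)
  refine ⟨max J M, fun m hm => ?_⟩
  have hsmall : c J / 2 ^ (m - J) < ε / 2 := by
    simpa [abs_of_nonneg (hc J)] using hM m (le_of_max_le_right hm)
  rw [Real.dist_eq, sub_zero, abs_of_nonneg (hc m)]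
  linarith [hdecay m (le_of_max_le_left hm)]

section DyadicDensity

variable (p : ℕ → Prop) [DecidablePred p]

lemma count_two_pow_succ (i : ℕ) :
    Nat.count p (2 ^ (i + 1)) = Nat.count p (2 ^ i) + #{j ∈ dyadicBlock i | p j} := by
  rw [Nat.count_eq_card_filter_range, Nat.count_eq_card_filter_range, range_eq_Ico,
    range_eq_Ico, dyadicBlock, ← Ico_union_Ico_eq_Ico (Nat.zero_le _)
      (Nat.pow_le_pow_right two_pos i.le_succ), filter_union,
    card_union_of_disjoint (disjoint_filter_filter (Ico_disjoint_Ico_consecutive _ _ _))]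

lemma count_div_le_two_mul_count_two_pow_div (n : ℕ) :
    (Nat.count p n : ℝ) / n ≤
      2 * (Nat.count p (2 ^ (Nat.log 2 n + 1)) / 2 ^ (Nat.log 2 n + 1)) := by
  rcases n.eq_zero_or_pos with rfl | hn
  · simp only [Nat.count_zero, CharP.cast_eq_zero, div_zero]
    positivity
  have hlog : (2 : ℝ) ^ Nat.log 2 n ≤ n := by exact_mod_cast Nat.pow_log_le_self 2 hn.ne'
  have hcount : (Nat.count p n : ℝ) ≤ Nat.count p (2 ^ (Nat.log 2 n + 1)) := by
    exact_mod_cast Nat.count_monotone p (Nat.lt_pow_succ_log_self one_lt_two n).le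
  calc (Nat.count p n : ℝ) / n ≤ Nat.count p (2 ^ (Nat.log 2 n + 1)) / 2 ^ Nat.log 2 n := by
        gcongr
    _ = 2 * (Nat.count p (2 ^ (Nat.log 2 n + 1)) / 2 ^ (Nat.log 2 n + 1)) := by
        rw [pow_succ (2 : ℝ)]; field_simp

theorem tendsto_count_div_iff_dyadicBlock :
    Tendsto (fun n => (Nat.count p n : ℝ) / n) atTop (𝓝 0) ↔
      Tendsto (fun i => (#{j ∈ dyadicBlock i | p j} : ℝ) / 2 ^ i) atTop (𝓝 0) := by
  set c : ℕ → ℝ := fun m => Nat.count p (2 ^ m) / 2 ^ m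
  set b : ℕ → ℝ := fun i => (#{j ∈ dyadicBlock i | p j} : ℝ) / 2 ^ i
  have hrec : ∀ m, c (m + 1) = (c m + b m) / 2 := fun m => by
    simp only [c, b, count_two_pow_succ, Nat.cast_add, pow_succ (2 : ℝ)]
    field_simp
  have hb_le : ∀ i, b i ≤ 2 * c (i + 1) := fun i => by
    linarith [hrec i, show 0 ≤ c i by positivity]
  constructor
  · intro h
    have hc : Tendsto c atTop (𝓝 0) := by
      simpa [c, Function.comp_def] using h.comp (tendsto_pow_atTop_atTop_of_one_lt one_lt_two)
    refine squeeze_zero (fun i => by positivity) hb_le ?_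
    simpa using (hc.comp (tendsto_add_atTop_nat 1)).const_mul 2
  · intro h
    have hc : Tendsto c atTop (𝓝 0) :=
      tendsto_zero_of_le_half_add (fun m => by positivity) (fun m => (hrec m).le) h
    have hlog : Tendsto (fun n => Nat.log 2 n + 1) atTop atTop :=
      tendsto_atTop_atTop.2 fun k =>
        ⟨2 ^ k, fun n hn => (Nat.le_log_of_pow_le one_lt_two hn).trans (Nat.le_succ _)⟩
    refine squeeze_zero (fun n => by positivity) (count_div_le_two_mul_count_two_pow_div p) ?_
    simpa using (hc.comp hlog).const_mul 2

end DyadicDensity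

lemma card_filter_ne_le_add {α β : Type*} [DecidableEq α] [DecidableEq β] (t : Finset α)
    (x y z : α → β) :
    #{j ∈ t | x j ≠ z j} ≤ #{j ∈ t | x j ≠ y j} + #{j ∈ t | y j ≠ z j} := by
  refine (card_le_card fun j => ?_).trans (card_union_le _ _)
  simp only [mem_filter, mem_union]
  grind

noncomputable def dyadicDist (x y : ℕ → Bool) (i : ℕ) : ℝ :=
  #{j ∈ dyadicBlock i | x j ≠ y j} / 2 ^ i

lemma densityZeroEquiv_iff_tendsto_dyadicDist (x y : ℕ → Bool) :
    densityZeroEquiv x y ↔ Tendsto (dyadicDist x y) atTop (𝓝 0) := by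
  simp only [densityZeroEquiv, ← Nat.count_eq_card_filter_range]
  exact tendsto_count_div_iff_dyadicBlock _

lemma dyadicDist_nonneg (x y : ℕ → Bool) (i : ℕ) : 0 ≤ dyadicDist x y i := by
  unfold dyadicDist; positivity

lemma abs_dyadicDist_sub_le (x y z : ℕ → Bool) (i : ℕ) :
    |dyadicDist x z i - dyadicDist y z i| ≤ dyadicDist x y i := by
  have hxz := card_filter_ne_le_add (dyadicBlock i) x y z
  have hyz := card_filter_ne_le_add (dyadicBlock i) y x z
  have hsymm : #{j ∈ dyadicBlock i | y j ≠ x j} = #{j ∈ dyadicBlock i | x j ≠ y j} := by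
    rw [filter_congr fun j _ => ne_comm]
  rw [hsymm] at hyz
  rify at hxz hyz
  simp only [dyadicDist, ← sub_div, abs_div, abs_of_pos (by positivity : (0 : ℝ) < 2 ^ i)]
  gcongr
  rw [abs_sub_le_iff]
  constructor <;> linarith

lemma measurable_dyadicDist_left (z : ℕ → Bool) (i : ℕ) :
    Measurable fun x => dyadicDist x z i := by
  simp only [dyadicDist, card_filter, Nat.cast_sum]
  refine Measurable.div_const (Finset.measurable_sum _ fun j _ => ?_) _
  exact (measurable_of_countable (fun b : Bool => ((if b ≠ z j then 1 else 0 : ℕ) : ℝ))).comp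
    (measurable_pi_apply j)

lemma c0Equiv_iff_tendsto_cofinite (x y : ℕ → ℝ) :
    c0Equiv x y ↔ Tendsto (fun n => x n - y n) cofinite (𝓝 0) := by
  rw [c0Equiv, Nat.cofinite_eq_atTop]

lemma c0Equiv_comp_ofNat_iff {α : Type*} [Denumerable α] (u v : α → ℝ) :
    c0Equiv (fun n => u (Denumerable.ofNat α n)) (fun n => v (Denumerable.ofNat α n)) ↔
      Tendsto (fun a => u a - v a) cofinite (𝓝 0) := by
  let e : ℕ ≃ α := (Denumerable.eqv α).symm
  change c0Equiv (fun n => u (e n)) (fun n => v (e n)) ↔ _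
  rw [c0Equiv_iff_tendsto_cofinite]
  refine ⟨fun h => ?_, fun h => h.comp e.injective.tendsto_cofinite⟩
  simpa [Function.comp_def] using h.comp e.symm.injective.tendsto_cofinite

lemma tendsto_cofinite_prod_of_norm_le {ι κ E : Type*} [SeminormedAddCommGroup E]
    {u : ι × κ → E} {v : ι → ℝ} (hv : Tendsto v cofinite (𝓝 0))
    (hle : ∀ i k, ‖u (i, k)‖ ≤ v i) (hfin : ∀ i, {k | u (i, k) ≠ 0}.Finite) :
    Tendsto u cofinite (𝓝 0) := by
  refine NormedAddGroup.tendsto_nhds_zero.2 fun ε hε => eventually_cofinite.2 ?_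
  have hbig : {i | ε ≤ v i}.Finite := by
    simpa using eventually_cofinite.1 (hv.eventually (gt_mem_nhds hε))
  refine (hbig.biUnion fun i _ => (hfin i).image (Prod.mk i)).subset ?_
  rintro ⟨i, k⟩ hik
  have hik : ε ≤ ‖u (i, k)‖ := not_lt.1 hik
  refine Set.mem_biUnion (hik.trans (hle i k)) ⟨k, fun h => ?_, rfl⟩
  simp only [h, norm_zero] at hik
  exact hik.not_gt hε

lemma Filter.Tendsto.comp_graph {ι κ X : Type*} {u : ι × κ → X} {l : Filter X}
    (hu : Tendsto u cofinite l) (g : ι → κ) : Tendsto (fun i => u (i, g i)) cofinite l :=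
  hu.comp (Function.Injective.tendsto_cofinite fun _ _ h => congrArg Prod.fst h)

lemma dyadicDist_self (x : ℕ → Bool) (i : ℕ) : dyadicDist x x i = 0 := by
  simp [dyadicDist]

lemma dyadicDist_congr_right {x y y' : ℕ → Bool} {i : ℕ}
    (h : ∀ j ∈ dyadicBlock i, y j = y' j) :
    dyadicDist x y i = dyadicDist x y' i := by
  unfold dyadicDist
  rw [filter_congr fun j hj => by rw [h j hj]]

/-- Only the finitely many `s ⊆ dyadicBlock k` get a nonzero coordinate at level `k`, so that
convergence along `cofinite` can be read off level by level. -/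
noncomputable def blockCode (A : ℕ → Bool) (q : ℕ × Finset ℕ) : ℝ :=
  if q.2 ⊆ dyadicBlock q.1 then dyadicDist A (fun j => decide (j ∈ q.2)) q.1 else 0

lemma measurable_blockCode (q : ℕ × Finset ℕ) : Measurable fun A => blockCode A q := by
  unfold blockCode
  split_ifs
  exacts [measurable_dyadicDist_left _ _, measurable_const]

lemma blockCode_sub_blockCode_self (A B : ℕ → Bool) (k : ℕ) :
    blockCode A (k, {j ∈ dyadicBlock k | B j}) - blockCode B (k, {j ∈ dyadicBlock k | B j}) =
      dyadicDist A B k := by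
  have hB : ∀ j ∈ dyadicBlock k, decide (j ∈ {j ∈ dyadicBlock k | B j}) = B j := by
    intro j hj
    simp [hj]
  simp only [blockCode, if_pos (filter_subset _ _), dyadicDist_congr_right hB, dyadicDist_self,
    sub_zero]

theorem densityZeroEquiv_iff_tendsto_blockCode (A B : ℕ → Bool) :
    densityZeroEquiv A B ↔
      Tendsto (fun q => blockCode A q - blockCode B q) cofinite (𝓝 0) := by
  rw [densityZeroEquiv_iff_tendsto_dyadicDist, ← Nat.cofinite_eq_atTop]
  refine ⟨fun h => tendsto_cofinite_prod_of_norm_le h (fun k s => ?_) (fun k => ?_),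
    fun h => ?_⟩
  · rw [Real.norm_eq_abs]
    unfold blockCode
    split_ifs
    exacts [abs_dyadicDist_sub_le _ _ _ _, by simpa using dyadicDist_nonneg A B k]
  · refine (dyadicBlock k).powerset.finite_toSet.subset fun s hs => mem_powerset.2 ?_
    by_contra hsub
    exact hs (by simp [blockCode, hsub])
  · simpa only [blockCode_sub_blockCode_self] using
      h.comp_graph fun k => {j ∈ dyadicBlock k | B j}

theorem borelReducible_densityZeroEquiv_c0Equiv : BorelReducible densityZeroEquiv c0Equiv :=
  ⟨fun A n => blockCode A (Denumerable.ofNat _ n),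
    measurable_pi_lambda _ fun _ => measurable_blockCode _,
    fun A B =>
      (densityZeroEquiv_iff_tendsto_blockCode A B).trans (c0Equiv_comp_ofNat_iff _ _).symm⟩

lemma tendsto_zero_of_tendsto_min_abs_one {α : Type*} {l : Filter α} {f : α → ℝ}
    (h : Tendsto (fun a => min |f a| 1) l (𝓝 0)) : Tendsto f l (𝓝 0) := by
  rw [tendsto_zero_iff_abs_tendsto_zero]
  refine h.congr' ((h.eventually (gt_mem_nhds one_pos)).mono fun a ha => ?_)
  exact min_eq_left ((min_lt_iff.1 ha).resolve_right (lt_irrefl 1)).le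

noncomputable def ramp (k : ℤ) (t : ℝ) : ℝ := max (min (t - k) 1) 0

lemma ramp_nonneg (k : ℤ) (t : ℝ) : 0 ≤ ramp k t := le_max_right _ _

lemma ramp_le_one (k : ℤ) (t : ℝ) : ramp k t ≤ 1 :=
  max_le (min_le_right _ _) zero_le_one

lemma ramp_of_le {k : ℤ} {t : ℝ} (h : t ≤ k) : ramp k t = 0 := by
  rw [ramp, max_eq_right (min_le_of_left_le (by linarith))]

lemma ramp_of_add_one_le {k : ℤ} {t : ℝ} (h : (k : ℝ) + 1 ≤ t) : ramp k t = 1 := by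
  rw [ramp, min_eq_right (by linarith), max_eq_left zero_le_one]

lemma continuous_ramp (k : ℤ) : Continuous (ramp k) := by
  unfold ramp; fun_prop

lemma abs_ramp_sub_ramp_le (k : ℤ) (a b : ℝ) : |ramp k a - ramp k b| ≤ |a - b| :=
  calc |ramp k a - ramp k b| ≤ |min (a - k) 1 - min (b - k) 1| := abs_max_sub_max_le_abs _ _ _
    _ ≤ max |(a - k) - (b - k)| |1 - 1| := abs_min_sub_min_le_max _ _ _ _
    _ = |a - b| := by
      rw [sub_sub_sub_cancel_right, sub_self, abs_zero, max_eq_left (abs_nonneg _)]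

lemma finite_setOf_ramp_ne (a b : ℝ) : {k : ℤ | ramp k a ≠ ramp k b}.Finite := by
  refine (Set.finite_Icc ⌊min a b⌋ ⌈max a b⌉).subset fun k hk => ?_
  by_contra hout
  rw [Set.mem_Icc, not_and_or, not_le, not_le] at hout
  rcases hout with hlow | hhigh
  · have hk1 : (k : ℝ) + 1 ≤ min a b := by
      have := Int.floor_le (min a b)
      have : ((k + 1 : ℤ) : ℝ) ≤ ⌊min a b⌋ := Int.cast_le.2 (Int.add_one_le_of_lt hlow)
      push_cast at this
      linarith
    exact hk (by rw [ramp_of_add_one_le (hk1.trans (min_le_left a b)),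
      ramp_of_add_one_le (hk1.trans (min_le_right a b))])
  · have hk0 : max a b ≤ k := Int.ceil_le.1 hhigh.le
    exact hk (by rw [ramp_of_le ((le_max_left a b).trans hk0),
      ramp_of_le ((le_max_right a b).trans hk0)])

lemma ramp_add_ramp_add_one (k : ℤ) (t : ℝ) :
    ramp k t + ramp (k + 1) t = max (min (t - k) 2) 0 := by
  simp only [ramp, Int.cast_add, Int.cast_one, min_def, max_def]
  split_ifs <;> linarith

lemma exists_min_abs_sub_le_two_mul_abs_ramp_sub (a b : ℝ) :
    ∃ k : ℤ, min |a - b| 1 ≤ 2 * |ramp k a - ramp k b| := by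
  wlog hab : a ≤ b generalizing a b
  · obtain ⟨k, hk⟩ := this b a (le_of_not_ge hab)
    exact ⟨k, by rwa [abs_sub_comm a, abs_sub_comm (ramp k a)]⟩
  set k := ⌊a⌋
  have hka : (k : ℝ) ≤ a := Int.floor_le a
  have hak : a < k + 1 := Int.lt_floor_add_one a
  have hrise : min |a - b| 1 ≤ (ramp k b + ramp (k + 1) b) - (ramp k a + ramp (k + 1) a) := by
    have hsa : max (min (a - k) 2) 0 = a - k := by
      rw [min_eq_left (by linarith), max_eq_left (by linarith)]
    have hsb : max (min (b - k) 2) 0 = min (b - k) 2 :=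
      max_eq_left (le_min (by linarith) zero_le_two)
    rw [ramp_add_ramp_add_one, ramp_add_ramp_add_one, hsa, hsb, abs_sub_comm,
      abs_of_nonneg (sub_nonneg.2 hab)]
    rcases min_cases (b - k) 2 with ⟨h, -⟩ | ⟨h, -⟩ <;> rw [h]
    · linarith [min_le_left (b - a) 1]
    · linarith [min_le_right (b - a) 1]
  rcases le_total |ramp k b - ramp k a| |ramp (k + 1) b - ramp (k + 1) a| with h | h
  · refine ⟨k + 1, ?_⟩
    rw [abs_sub_comm (ramp _ a)]
    linarith [le_abs_self (ramp k b - ramp k a), le_abs_self (ramp (k + 1) b - ramp (k + 1) a)]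
  · refine ⟨k, ?_⟩
    rw [abs_sub_comm (ramp _ a)]
    linarith [le_abs_self (ramp k b - ramp k a), le_abs_self (ramp (k + 1) b - ramp (k + 1) a)]

theorem c0Equiv_iff_tendsto_ramp (x y : ℕ → ℝ) :
    c0Equiv x y ↔
      Tendsto (fun q : ℕ × ℤ => ramp q.2 (x q.1) - ramp q.2 (y q.1)) cofinite (𝓝 0) := by
  rw [c0Equiv_iff_tendsto_cofinite]
  constructor
  · intro h
    refine tendsto_cofinite_prod_of_norm_le (tendsto_zero_iff_abs_tendsto_zero _ |>.1 h)
      (fun n k => abs_ramp_sub_ramp_le k (x n) (y n)) fun n => ?_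
    simpa only [ne_eq, sub_eq_zero] using finite_setOf_ramp_ne (x n) (y n)
  · intro h
    choose k hk using fun n => exists_min_abs_sub_le_two_mul_abs_ramp_sub (x n) (y n)
    have hramp := (tendsto_zero_iff_abs_tendsto_zero _).1 (h.comp_graph k)
    exact tendsto_zero_of_tendsto_min_abs_one <| squeeze_zero
      (fun n => le_min (abs_nonneg _) zero_le_one) hk (by simpa using hramp.const_mul 2)

/-- On the `i`-th dyadic block, the initial segment of length `⌊u i * 2 ^ i⌋₊`. -/
noncomputable def dyadicSegments (u : ℕ → ℝ) (j : ℕ) : Bool :=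
  decide (j - 2 ^ Nat.log 2 j < ⌊u (Nat.log 2 j) * 2 ^ Nat.log 2 j⌋₊)

lemma measurable_dyadicSegments {Ω : Type*} [MeasurableSpace Ω] {u : Ω → ℕ → ℝ}
    (hu : ∀ i, Measurable fun ω => u ω i) : Measurable fun ω => dyadicSegments (u ω) :=
  measurable_pi_lambda _ fun j =>
    (measurable_of_countable fun m => decide (j - 2 ^ Nat.log 2 j < m)).comp
      (Nat.measurable_floor.comp ((hu _).mul_const _))

lemma filter_dyadicBlock_lt_ne_lt {i m m' : ℕ} (hm : m ≤ 2 ^ i) (hm' : m' ≤ 2 ^ i) :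
    {j ∈ dyadicBlock i | decide (j - 2 ^ i < m) ≠ decide (j - 2 ^ i < m')} =
      Ico (2 ^ i + min m m') (2 ^ i + max m m') := by
  ext j
  simp only [dyadicBlock, mem_filter, mem_Ico, ne_eq, decide_eq_decide, pow_succ]
  omega

lemma dyadicDist_dyadicSegments {u v : ℕ → ℝ} {i : ℕ} (hu : u i ≤ 1) (hv : v i ≤ 1) :
    dyadicDist (dyadicSegments u) (dyadicSegments v) i =
      |(⌊u i * 2 ^ i⌋₊ : ℝ) - ⌊v i * 2 ^ i⌋₊| / 2 ^ i := by
  have hlog : ∀ j ∈ dyadicBlock i, Nat.log 2 j = i := fun j hj => by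
    simp only [dyadicBlock, mem_Ico] at hj
    exact Nat.log_eq_of_pow_le_of_lt_pow hj.1 hj.2
  have hfloor : ∀ t : ℝ, t ≤ 1 → ⌊t * 2 ^ i⌋₊ ≤ 2 ^ i := fun t ht =>
    Nat.floor_le_of_le (by exact_mod_cast mul_le_of_le_one_left (by positivity) ht)
  rw [dyadicDist, filter_congr fun j hj => by rw [dyadicSegments, dyadicSegments, hlog j hj],
    filter_dyadicBlock_lt_ne_lt (hfloor _ hu) (hfloor _ hv), Nat.card_Ico, Nat.add_sub_add_left,
    Nat.cast_sub min_le_max, Nat.cast_max, Nat.cast_min, max_sub_min_eq_abs']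

lemma dist_dyadicDist_dyadicSegments_le {u v : ℕ → ℝ} {i : ℕ} (hu : u i ∈ Set.Icc 0 1)
    (hv : v i ∈ Set.Icc 0 1) :
    dist (dyadicDist (dyadicSegments u) (dyadicSegments v) i) |u i - v i| ≤ 1 / 2 ^ i := by
  set a := u i * 2 ^ i
  set b := v i * 2 ^ i
  have hpow : (0 : ℝ) < 2 ^ i := by positivity
  have ha := Nat.floor_le (mul_nonneg hu.1 hpow.le)
  have ha' := Nat.lt_floor_add_one a
  have hb := Nat.floor_le (mul_nonneg hv.1 hpow.le)
  have hb' := Nat.lt_floor_add_one b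
  have huv : |u i - v i| = |a - b| / 2 ^ i := by
    rw [← sub_mul, abs_mul, abs_of_pos hpow, mul_div_cancel_right₀ _ hpow.ne']
  rw [dyadicDist_dyadicSegments hu.2 hv.2, huv, Real.dist_eq,
    ← sub_div, abs_div, abs_of_pos hpow]
  gcongr
  refine (abs_abs_sub_abs_le _ _).trans (abs_le.2 ⟨?_, ?_⟩) <;> linarith

theorem densityZeroEquiv_dyadicSegments_iff {u v : ℕ → ℝ} (hu : ∀ i, u i ∈ Set.Icc 0 1)
    (hv : ∀ i, v i ∈ Set.Icc 0 1) :
    densityZeroEquiv (dyadicSegments u) (dyadicSegments v) ↔ c0Equiv u v := by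
  rw [densityZeroEquiv_iff_tendsto_dyadicDist, c0Equiv,
    tendsto_zero_iff_abs_tendsto_zero fun i => u i - v i]
  have hdist : Tendsto (fun i => dist (dyadicDist (dyadicSegments u) (dyadicSegments v) i)
      |u i - v i|) atTop (𝓝 0) :=
    squeeze_zero (fun _ => dist_nonneg) (fun i => dist_dyadicDist_dyadicSegments_le (hu i) (hv i))
      (tendsto_const_nhds.div_atTop (tendsto_pow_atTop_atTop_of_one_lt one_lt_two))
  exact ⟨fun h => h.congr_dist hdist,
    fun h => h.congr_dist (by simpa only [dist_comm, Function.comp_def] using hdist)⟩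

theorem borelReducible_c0Equiv_densityZeroEquiv : BorelReducible c0Equiv densityZeroEquiv := by
  let code (x : ℕ → ℝ) (n : ℕ) : ℝ :=
    ramp (Denumerable.ofNat (ℕ × ℤ) n).2 (x (Denumerable.ofNat (ℕ × ℤ) n).1)
  have hcode : ∀ x n, code x n ∈ Set.Icc 0 1 := fun _ _ => ⟨ramp_nonneg _ _, ramp_le_one _ _⟩
  refine ⟨fun x => dyadicSegments (code x),
    measurable_dyadicSegments fun _ =>
      (continuous_ramp _).measurable.comp (measurable_pi_apply _),
    fun x y => ?_⟩
  rw [densityZeroEquiv_dyadicSegments_iff (hcode x) (hcode y), c0Equiv_iff_tendsto_ramp]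
  exact (c0Equiv_comp_ofNat_iff (fun q : ℕ × ℤ => ramp q.2 (x q.1)) _).symm

/-- Oliver: the equivalence relation `E_{𝒵₀}` induced by the density ideal `𝒵₀` is Borel
bireducible with the equivalence relation `E_{c₀}` induced by the Banach space `c₀`. -/
theorem densityZeroEquiv_borel_bireducible_c0Equiv :
    BorelReducible densityZeroEquiv c0Equiv ∧ BorelReducible c0Equiv densityZeroEquiv :=
  ⟨borelReducible_densityZeroEquiv_c0Equiv, borelReducible_c0Equiv_densityZeroEquiv⟩
end

section
/- Every I-favorable topological space is universally Kuratowski–Ulam. -/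
/-!
Fix a winning strategy `σ` of Player I in the open-open game on `Y` and a nowhere dense
`F ⊆ X × Y`. Build a tree of pairs `(U, V)` of nonempty open sets: the children of a node
`(U₀, V₀), …, (Uₙ₋₁, Vₙ₋₁)` are a maximal family of pairs with the `U`'s pairwise disjoint
inside `Uₙ₋₁`, `V ⊆ σ(V₀, …, Vₙ₋₁)` and `U × V` missing `F`. Since `F` is nowhere dense, the
`U`'s of each level are dense in the previous one, so the union `Gₙ` of the `U`'s at level `n`
is open and dense. A point `x ∈ ⋂ₙ Gₙ` lies on a unique branch, whose `V`'s form a play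
consistent with `σ`; hence their union is dense, open and disjoint from the section `Fₓ`,
so `Fₓ` is nowhere dense. A meager `A` is covered by countably many nowhere dense `F`.
-/

universe u v

/-- A topological space is I-favorable if Player I has a winning strategy in the open-open
game: a function `σ` assigning to each finite sequence of nonempty open sets a nonempty open
set, such that whenever the nonempty open sets `V n` satisfy `V n ⊆ σ (V 0, …, V (n-1))` for
all `n`, the union `⋃ n, V n` is dense. -/
def IFavorable (X : Type u) [TopologicalSpace X] : Prop :=
  ∃ σ : List {U : Set X // IsOpen U ∧ U.Nonempty} → {U : Set X // IsOpen U ∧ U.Nonempty},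
    ∀ V : ℕ → {U : Set X // IsOpen U ∧ U.Nonempty},
      (∀ n, (V n : Set X) ⊆ (σ (List.ofFn fun i : Fin n => V i) : Set X)) →
      Dense (⋃ n, (V n : Set X))

/-- A space `Y` is universally Kuratowski–Ulam if for every space `X` and every meager
subset `A` of `X × Y`, the set of `x ∈ X` whose section `Aₓ` is nonmeager is meager. -/
def UniversallyKuratowskiUlam (Y : Type v) [TopologicalSpace Y] : Prop :=
  ∀ (X : Type u) (_ : TopologicalSpace X) (A : Set (X × Y)), IsMeagre A →
    IsMeagre {x : X | ¬IsMeagre {y : Y | (x, y) ∈ A}}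

open Set

section NowhereDense

variable {X Y : Type*} [TopologicalSpace X] [TopologicalSpace Y]

theorem Dense.isNowhereDense_of_disjoint {s D : Set X} (hD : Dense D) (hDo : IsOpen D)
    (hsD : Disjoint s D) : IsNowhereDense s :=
  (isClosed_isNowhereDense_iff_compl.mpr ⟨by rwa [compl_compl], by rwa [compl_compl]⟩).2.mono
    hsD.subset_compl_right

theorem IsNowhereDense.exists_prod_disjoint {F : Set (X × Y)} (hF : IsNowhereDense F)
    {U : Set X} {V : Set Y} (hU : IsOpen U) (hV : IsOpen V) (hUne : U.Nonempty)
    (hVne : V.Nonempty) :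
    ∃ U' ⊆ U, ∃ V' ⊆ V, IsOpen U' ∧ IsOpen V' ∧ U'.Nonempty ∧ V'.Nonempty ∧
      Disjoint (U' ×ˢ V') F := by
  obtain ⟨z, ⟨hzU, hzV⟩, hzF⟩ : (U ×ˢ V ∩ (closure F)ᶜ).Nonempty :=
    (interior_eq_empty_iff_dense_compl.mp hF).inter_open_nonempty _ (hU.prod hV)
      (hUne.prod hVne)
  obtain ⟨u, v, hu, hv, hzu, hzv, huv⟩ := isOpen_prod_iff.mp isClosed_closure.isOpen_compl
    z.1 z.2 hzF
  refine ⟨u ∩ U, inter_subset_right, v ∩ V, inter_subset_right, hu.inter hU, hv.inter hV,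
    ⟨z.1, hzu, hzU⟩, ⟨z.2, hzv, hzV⟩, ?_⟩
  exact (disjoint_compl_left.mono_right subset_closure).mono_left
    ((prod_mono inter_subset_left inter_subset_left).trans huv)

theorem exists_pairwiseDisjoint_subset_closure_biUnion {ι : Type*} {s : Set ι}
    {f : ι → Set X} {W : Set X}
    (h : ∀ O, IsOpen O → (W ∩ O).Nonempty → ∃ i ∈ s, (f i).Nonempty ∧ f i ⊆ O) :
    ∃ T ⊆ s, T.PairwiseDisjoint f ∧ W ⊆ closure (⋃ i ∈ T, f i) := by
  obtain ⟨T, hT⟩ := zorn_subset {T | T ⊆ s ∧ T.PairwiseDisjoint f} fun c hcS hc =>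
    ⟨⋃₀ c, ⟨sUnion_subset fun t ht => (hcS ht).1,
      (hc.pairwiseDisjoint_sUnion f).2 fun t ht => (hcS ht).2⟩, fun _ => subset_sUnion_of_mem⟩
  refine ⟨T, hT.prop.1, hT.prop.2, fun a ha => by_contra fun haT => ?_⟩
  obtain ⟨i, his, ⟨b, hb⟩, hiO⟩ := h _ isClosed_closure.isOpen_compl ⟨a, ha, haT⟩
  have hdisj : ∀ j ∈ T, Disjoint (f i) (f j) := fun j hj =>
    disjoint_compl_left.mono hiO ((subset_biUnion_of_mem hj).trans subset_closure)
  have hiT : i ∉ T := fun hiT => (hdisj i hiT).ne_of_mem hb hb rfl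
  exact hiT (hT.mem_of_prop_insert
    ⟨insert_subset his hT.prop.1, hT.prop.2.insert fun j hj _ => hdisj j hj⟩)

end NowhereDense

abbrev NonemptyOpen (X : Type*) [TopologicalSpace X] := {U : Set X // IsOpen U ∧ U.Nonempty}

namespace KuratowskiUlam

variable {X Y : Type*} [TopologicalSpace X] [TopologicalSpace Y]

/-- Nodes of the tree list their pairs `(U, V)` with the most recent one first. -/
abbrev Node (X Y : Type*) [TopologicalSpace X] [TopologicalSpace Y] :=
  List (NonemptyOpen X × NonemptyOpen Y)

def cell : Node X Y → Set X
  | [] => univ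
  | p :: _ => p.1

def moves (l : Node X Y) : List (NonemptyOpen Y) := (l.map Prod.snd).reverse

theorem isOpen_cell : ∀ l : Node X Y, IsOpen (cell l)
  | [] => isOpen_univ
  | p :: _ => p.1.2.1

theorem moves_cons (p : NonemptyOpen X × NonemptyOpen Y) (l : Node X Y) :
    moves (p :: l) = moves l ++ [p.2] := by
  simp [moves]

variable (F : Set (X × Y)) (σ : List (NonemptyOpen Y) → NonemptyOpen Y)

def IsChild (l : Node X Y) (p : NonemptyOpen X × NonemptyOpen Y) : Prop :=
  (p.1 : Set X) ⊆ cell l ∧ (p.2 : Set Y) ⊆ σ (moves l) ∧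
    Disjoint ((p.1 : Set X) ×ˢ (p.2 : Set Y)) F

def IsChildFamily (l : Node X Y) (T : Set (NonemptyOpen X × NonemptyOpen Y)) : Prop :=
  T ⊆ {p | IsChild F σ l p} ∧ T.PairwiseDisjoint (fun p => (p.1 : Set X)) ∧
    cell l ⊆ closure (⋃ p ∈ T, (p.1 : Set X))

noncomputable def children (l : Node X Y) : Set (NonemptyOpen X × NonemptyOpen Y) :=
  Classical.epsilon (IsChildFamily F σ l)

inductive IsNode : Node X Y → Prop
  | nil : IsNode []
  | cons {p l} : IsNode l → p ∈ children F σ l → IsNode (p :: l)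

def level (n : ℕ) : Set X := ⋃ l ∈ {l : Node X Y | IsNode F σ l ∧ l.length = n}, cell l

variable {F σ}

theorem exists_isChildFamily (hF : IsNowhereDense F) (l : Node X Y) :
    ∃ T, IsChildFamily F σ l T :=
  exists_pairwiseDisjoint_subset_closure_biUnion fun O hO hlO => by
    obtain ⟨U, hUO, V, hVσ, hU, hV, hUne, hVne, hUV⟩ := hF.exists_prod_disjoint
      ((isOpen_cell l).inter hO) (σ (moves l)).2.1 hlO (σ (moves l)).2.2
    exact ⟨(⟨U, hU, hUne⟩, ⟨V, hV, hVne⟩), ⟨hUO.trans inter_subset_left, hVσ, hUV⟩, hUne,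
      hUO.trans inter_subset_right⟩

theorem isChildFamily_children (hF : IsNowhereDense F) (l : Node X Y) :
    IsChildFamily F σ l (children F σ l) :=
  Classical.epsilon_spec (exists_isChildFamily hF l)

theorem isChild_of_mem_children (hF : IsNowhereDense F) {l : Node X Y} {p}
    (hp : p ∈ children F σ l) : IsChild F σ l p :=
  (isChildFamily_children hF l).1 hp

theorem cell_cons_subset (hF : IsNowhereDense F) {l : Node X Y} {p}
    (hp : p ∈ children F σ l) : cell (p :: l) ⊆ cell l :=
  (isChild_of_mem_children hF hp).1

theorem mem_level {n : ℕ} {x : X} :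
    x ∈ level F σ n ↔ ∃ l, IsNode F σ l ∧ l.length = n ∧ x ∈ cell l := by
  simp [level, and_assoc]

theorem IsNode.cell_subset_level {l : Node X Y} (hl : IsNode F σ l) :
    cell l ⊆ level F σ l.length :=
  subset_biUnion_of_mem (u := cell) ⟨hl, rfl⟩

theorem isOpen_level (n : ℕ) : IsOpen (level F σ n) :=
  isOpen_biUnion fun l _ => isOpen_cell l

theorem level_subset_closure_level_succ (hF : IsNowhereDense F) (n : ℕ) :
    level F σ n ⊆ closure (level F σ (n + 1)) := by
  intro x hx
  obtain ⟨l, hl, rfl, hxl⟩ := mem_level.mp hx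
  refine closure_mono (iUnion₂_subset fun p hp => ?_)
    ((isChildFamily_children (σ := σ) hF l).2.2 hxl)
  exact (hl.cons hp).cell_subset_level

theorem dense_level (hF : IsNowhereDense F) (n : ℕ) : Dense (level F σ n) := by
  induction n with
  | zero => exact dense_univ.mono (IsNode.nil.cell_subset_level (F := F) (σ := σ))
  | succ n ih => exact dense_closure.mp (ih.mono (level_subset_closure_level_succ hF n))

theorem IsNode.eq_of_mem_cell (hF : IsNowhereDense F) {l₁ l₂ : Node X Y} {x : X}
    (h₁ : IsNode F σ l₁) (h₂ : IsNode F σ l₂) (hlen : l₁.length = l₂.length)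
    (hx₁ : x ∈ cell l₁) (hx₂ : x ∈ cell l₂) : l₁ = l₂ := by
  induction h₁ generalizing l₂ with
  | nil => exact (List.length_eq_zero_iff.mp hlen.symm).symm
  | @cons p₁ m₁ hm₁ hp₁ ih =>
    cases h₂ with
    | nil => simp at hlen
    | @cons p₂ m₂ hm₂ hp₂ =>
      obtain rfl : m₁ = m₂ := ih hm₂ (by simpa using hlen) (cell_cons_subset hF hp₁ hx₁)
        (cell_cons_subset hF hp₂ hx₂)
      obtain rfl : p₁ = p₂ := by_contra fun hne =>
        ((isChildFamily_children hF m₁).2.1 hp₁ hp₂ hne).ne_of_mem hx₁ hx₂ rfl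
      rfl

theorem isNowhereDense_section_of_forall_mem_level (hF : IsNowhereDense F)
    (hσ : ∀ V : ℕ → NonemptyOpen Y, (∀ n, (V n : Set Y) ⊆ σ (List.ofFn fun i : Fin n => V i)) →
      Dense (⋃ n, (V n : Set Y)))
    {x : X} (hx : ∀ n, x ∈ level F σ n) : IsNowhereDense {y : Y | (x, y) ∈ F} := by
  choose c hc hlen hxc using fun n => mem_level.mp (hx n)
  have hstep : ∀ n, ∃ p ∈ children F σ (c n), c (n + 1) = p :: c n := by
    intro n
    obtain ⟨p, l, hpl⟩ := List.exists_cons_of_length_eq_add_one (hlen (n + 1))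
    have hnode := hpl ▸ hc (n + 1)
    cases hnode with
    | cons hl hp =>
      obtain rfl : l = c n := hl.eq_of_mem_cell hF (hc n)
        (by simpa [hlen] using (congrArg List.length hpl).symm)
        (cell_cons_subset hF hp (hpl ▸ hxc (n + 1))) (hxc n)
      exact ⟨p, hp, hpl⟩
  choose b hb hcb using hstep
  have hmoves : ∀ n, moves (c n) = List.ofFn fun i : Fin n => (b i).2 := by
    intro n
    induction n with
    | zero => simp [List.length_eq_zero_iff.mp (hlen 0), moves]
    | succ n ih => rw [hcb n, moves_cons, ih, List.ofFn_succ', List.concat_eq_append]; rfl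
  have hplay : Dense (⋃ n, ((b n).2 : Set Y)) := hσ (fun n => (b n).2) fun n =>
    hmoves n ▸ (isChild_of_mem_children hF (hb n)).2.1
  have hxb : ∀ n, x ∈ ((b n).1 : Set X) := fun n => by simpa [hcb n, cell] using hxc (n + 1)
  refine hplay.isNowhereDense_of_disjoint (isOpen_iUnion fun n => (b n).2.2.1)
    (disjoint_iUnion_right.mpr fun n => disjoint_left.mpr fun y hy hyb => ?_)
  exact disjoint_left.mp (isChild_of_mem_children hF (hb n)).2.2
    (mk_mem_prod (hxb n) hyb) hy

end KuratowskiUlam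

open KuratowskiUlam in
theorem IFavorable.isMeagre_setOf_not_isNowhereDense_section {X Y : Type*}
    [TopologicalSpace X] [TopologicalSpace Y] (h : IFavorable Y) {F : Set (X × Y)}
    (hF : IsNowhereDense F) : IsMeagre {x : X | ¬IsNowhereDense {y : Y | (x, y) ∈ F}} := by
  obtain ⟨σ, hσ⟩ := h
  have hmeagre : IsMeagre (⋃ n, (level F σ n)ᶜ) := isMeagre_iUnion fun n =>
    ((dense_level hF n).isNowhereDense_of_disjoint (isOpen_level n) disjoint_compl_left).isMeagre
  refine hmeagre.mono fun x hx => ?_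
  by_contra hx'
  simp only [mem_iUnion, mem_compl_iff, not_exists, not_not] at hx'
  exact hx (isNowhereDense_section_of_forall_mem_level hF hσ hx')

theorem setOf_not_isMeagre_section_subset {X Y : Type*} [TopologicalSpace Y]
    {A : Set (X × Y)} {S : Set (Set (X × Y))} (hS : S.Countable) (hAS : A ⊆ ⋃₀ S) :
    {x | ¬IsMeagre {y : Y | (x, y) ∈ A}} ⊆
      ⋃ t ∈ S, {x | ¬IsNowhereDense {y : Y | (x, y) ∈ t}} := by
  intro x hx
  by_contra hx'
  simp only [mem_iUnion, mem_ofPred_eq, not_exists, not_not] at hx'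
  refine hx ((isMeagre_biUnion hS fun t ht => (hx' t ht).isMeagre).mono fun y hy => ?_)
  obtain ⟨t, ht, hyt⟩ := hAS hy
  exact mem_biUnion ht hyt

/-- Kucharski–Plewik: every I-favorable space is universally Kuratowski–Ulam. -/
theorem universallyKuratowskiUlam_of_iFavorable (Y : Type v) [TopologicalSpace Y]
    (h : IFavorable Y) : UniversallyKuratowskiUlam.{u} Y := by
  intro X _ A hA
  obtain ⟨S, hS, hSc, hAS⟩ := isMeagre_iff_countable_union_isNowhereDense.mp hA
  refine (isMeagre_biUnion hSc fun t ht => ?_).mono (setOf_not_isMeagre_section_subset hSc hAS)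
  exact h.isMeagre_setOf_not_isNowhereDense_section (hS t ht)
end
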